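/- There exists a translationally invariant 4-qubit state orthogonal to every symmetric product state, e.g., |ψ⟩ ∝ (|0101⟩ − |0011⟩ + all cyclic translations); its overlap ⟨ψ|a,a,a,a⟩ vanishes for every single-qubit state |a⟩. -/

import Mathlib

/-!
Against a symmetric product state `a ⊗ a ⊗ a ⊗ a`, every translate `T^t |p⟩` of a basis state
has the same overlap `∏ i, a (p i)`, and this product only depends on how many `0`s and `1`s
`p` contains. The patterns `0101` and `0011` contain the same letters, so each translate of
`|0101⟩ − |0011⟩` is orthogonal to `a ⊗ a ⊗ a ⊗ a`.
-/

open scoped BigOperators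

/-- Coefficients of the translationally invariant 4-qubit state
Σ_t T^t(|0101⟩ − |0011⟩), T the cyclic shift of tensor factors. -/
noncomputable def psiTI : (Fin 4 → Fin 2) → ℂ := fun s =>
  ∑ t : Fin 4,
    ((if (fun i => s (i + t)) = ![0, 1, 0, 1] then (1 : ℂ) else 0)
      - (if (fun i => s (i + t)) = ![0, 0, 1, 1] then (1 : ℂ) else 0))

theorem Fintype.sum_boole_comp_perm_mul_prod {ι α R : Type*} [Fintype ι] [DecidableEq ι]
    [Fintype α] [DecidableEq α] [CommSemiring R] (σ : Equiv.Perm ι) (p : ι → α) (a : α → R) :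
    ∑ s : ι → α, (if s ∘ σ = p then 1 else 0) * ∏ i, a (s i) = ∏ i, a (p i) := by
  simp only [← Equiv.eq_comp_symm, ite_mul, one_mul, zero_mul, Finset.sum_ite_eq',
    Finset.mem_univ, if_true, Function.comp_apply]
  exact Equiv.prod_comp σ.symm fun i => a (p i)

theorem conj_psiTI (s : Fin 4 → Fin 2) : (starRingEnd ℂ) (psiTI s) = psiTI s := by
  simp only [psiTI, map_sum, map_sub, apply_ite (starRingEnd ℂ), map_one, map_zero]

theorem psiTI_comp_add_one (s : Fin 4 → Fin 2) : psiTI (fun i => s (i + 1)) = psiTI s := by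
  refine Fintype.sum_equiv (Equiv.addRight 1) _ _ fun t => ?_
  simp only [Equiv.coe_addRight, add_assoc]
  rfl

theorem psiTI_zero_one_zero_one : psiTI ![0, 1, 0, 1] = 2 := by
  simp +decide only [psiTI, Fin.sum_univ_four]
  norm_num

theorem sum_psiTI_mul_prod (a : Fin 2 → ℂ) :
    ∑ s : Fin 4 → Fin 2, psiTI s * ∏ i, a (s i) = 0 := by
  have hshift (p : Fin 4 → Fin 2) (t : Fin 4) :
      ∑ s : Fin 4 → Fin 2, (if (fun i => s (i + t)) = p then (1 : ℂ) else 0) * ∏ i, a (s i) =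
        ∏ i, a (p i) :=
    Fintype.sum_boole_comp_perm_mul_prod (Equiv.addRight t) p a
  simp only [psiTI, Finset.sum_mul]
  rw [Finset.sum_comm]
  simp only [sub_mul, Finset.sum_sub_distrib, hshift]
  simp only [Fin.prod_univ_four, Finset.sum_const, Finset.card_univ, Fintype.card_fin,
    Matrix.cons_val]
  ring

/-- The state Σ_t T^t(|0101⟩−|0011⟩) is nonzero, translationally invariant, and
orthogonal to every symmetric product state |a⟩⊗|a⟩⊗|a⟩⊗|a⟩. -/
theorem stmt_12 :
    psiTI ≠ 0 ∧
    (∀ s : Fin 4 → Fin 2, psiTI (fun i => s (i + 1)) = psiTI s) ∧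
    (∀ a : Fin 2 → ℂ,
      ∑ s : Fin 4 → Fin 2, (starRingEnd ℂ) (psiTI s) * ∏ i, a (s i) = 0) := by
  refine ⟨fun h => ?_, psiTI_comp_add_one, fun a => ?_⟩
  · simpa [h] using psiTI_zero_one_zero_one
  · simpa only [conj_psiTI] using sum_psiTI_mul_prod a
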